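/- arXiv:1507.02959 — 3 statements merged into one kernel-verified Lean document; each statement's English description precedes it below -/
import Mathlib

section
/- For all integers i, j ≥ 0 and q ∈ ℂ with q^k ≠ 1 for 1 ≤ k ≤ max(i,j), we have q^{ij} = Σ_{k=0}^{min(i,j)} (-1)^k q^{k(k-1)/2} (q;q)_i (q;q)_j / ((q;q)_k (q;q)_{i-k} (q;q)_{j-k}). -/
noncomputable def qPoch (z q : ℂ) (n : ℕ) : ℂ := ∏ i ∈ Finset.range n, (1 - z * q ^ i)

noncomputable def qbin (q : ℂ) : ℕ → ℕ → ℂ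
  | _, 0 => 1
  | 0, _ + 1 => 0
  | n + 1, k + 1 => q ^ (k + 1) * qbin q n (k + 1) + qbin q n k

lemma qbin_zero_right (q : ℂ) (n : ℕ) : qbin q n 0 = 1 := by cases n <;> rfl

lemma qbin_succ_succ (q : ℂ) (n k : ℕ) :
    qbin q (n + 1) (k + 1) = q ^ (k + 1) * qbin q n (k + 1) + qbin q n k := rfl

lemma qbin_of_lt (q : ℂ) : ∀ n k : ℕ, n < k → qbin q n k = 0
  | 0, _ + 1, _ => rfl
  | n + 1, k + 1, h => by
    rw [qbin_succ_succ, qbin_of_lt q n (k + 1) (by omega), qbin_of_lt q n k (by omega)]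
    ring

lemma qbin_diag (q : ℂ) : ∀ n : ℕ, qbin q n n = 1
  | 0 => rfl
  | n + 1 => by
    rw [qbin_succ_succ, qbin_of_lt q n (n + 1) (by omega), qbin_diag q n]; ring

lemma qPoch_zero (q : ℂ) : qPoch q q 0 = 1 := rfl

lemma qPoch_succ (q : ℂ) (n : ℕ) :
    qPoch q q (n + 1) = qPoch q q n * (1 - q ^ (n + 1)) := by
  rw [qPoch, qPoch, Finset.prod_range_succ, pow_succ']

lemma qPoch_ne_zero {q : ℂ} {n : ℕ} (h : ∀ s : ℕ, 1 ≤ s → s ≤ n → q ^ s ≠ 1) :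
    qPoch q q n ≠ 0 := by
  induction n with
  | zero => simp [qPoch_zero]
  | succ n ih =>
    rw [qPoch_succ]
    refine mul_ne_zero (ih fun s h1 h2 => h s h1 (by omega)) ?_
    have := h (n + 1) (by omega) le_rfl
    intro hc
    exact this (sub_eq_zero.mp hc).symm

lemma qbin_mul (q : ℂ) : ∀ n k : ℕ, k ≤ n →
    qbin q n k * (qPoch q q k * qPoch q q (n - k)) = qPoch q q n := by
  intro n
  induction n with
  | zero => intro k hk; interval_cases k; simp [qbin_zero_right, qPoch_zero]
  | succ n ih =>
    intro k hk
    match k with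
    | 0 => simp [qbin_zero_right, qPoch_zero]
    | m + 1 =>
      rcases Nat.lt_or_ge m n with hm | hm
      · -- m + 1 ≤ n
        have ihA := ih (m + 1) (by omega)
        have ihB := ih m (by omega)
        rw [show n - (m + 1) = (n - m - 1) from by omega] at ihA
        rw [show n - m = (n - m - 1) + 1 from by omega, qPoch_succ] at ihB
        rw [qbin_succ_succ, show n + 1 - (m + 1) = (n - m - 1) + 1 from by omega,
          qPoch_succ q (n - m - 1), qPoch_succ q n, qPoch_succ q m]
        rw [qPoch_succ q m] at ihA
        have e4 : q ^ (m + 1) * q ^ (n - m - 1 + 1) = q ^ (n + 1) := by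
          rw [← pow_add]; congr 1; omega
        linear_combination (q ^ (m + 1) * (1 - q ^ (n - m - 1 + 1))) * ihA +
          (1 - q ^ (m + 1)) * ihB - qPoch q q n * e4
      · -- m = n
        have hmn : m = n := by omega
        subst hmn
        rw [qbin_succ_succ, qbin_of_lt q m (m + 1) (by omega), qbin_diag, Nat.sub_self,
          qPoch_zero]
        ring

lemma keyL (q : ℂ) (i : ℕ) (hi : ∀ s : ℕ, 1 ≤ s → s ≤ i → q ^ s ≠ 1) (k : ℕ) :
    q ^ k * (1 - q ^ (k + 1)) * qbin q i (k + 1) = (q ^ k - q ^ i) * qbin q i k := by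
  rcases Nat.lt_or_ge k i with hk | hk
  · -- k + 1 ≤ i
    have MA := qbin_mul q i (k + 1) (by omega)
    have MB := qbin_mul q i k (by omega)
    rw [show i - (k + 1) = i - k - 1 from by omega, qPoch_succ q k] at MA
    rw [show i - k = (i - k - 1) + 1 from by omega, qPoch_succ q (i - k - 1)] at MB
    have e4 : q ^ k * q ^ (i - k - 1 + 1) = q ^ i := by
      rw [← pow_add]; congr 1; omega
    have hPk : qPoch q q k ≠ 0 :=
      qPoch_ne_zero fun s h1 h2 => hi s h1 (by omega)
    have hPc : qPoch q q (i - k - 1) ≠ 0 :=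
      qPoch_ne_zero fun s h1 h2 => hi s h1 (by omega)
    have hX : (1 : ℂ) - q ^ (i - k - 1 + 1) ≠ 0 := by
      intro hc
      exact hi (i - k - 1 + 1) (by omega) (by omega) (sub_eq_zero.mp hc).symm
    have hC : qPoch q q k * qPoch q q (i - k - 1) * (1 - q ^ (i - k - 1 + 1)) ≠ 0 :=
      mul_ne_zero (mul_ne_zero hPk hPc) hX
    refine mul_right_cancel₀ hC ?_
    linear_combination (q ^ k * (1 - q ^ (i - k - 1 + 1))) * MA -
      (q ^ k - q ^ i) * MB - qPoch q q i * e4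
  · rcases Nat.lt_or_ge i k with hk2 | hk2
    · rw [qbin_of_lt q i (k + 1) (by omega), qbin_of_lt q i k (by omega)]; ring
    · have : i = k := by omega
      subst this
      rw [qbin_of_lt q i (i + 1) (by omega)]; ring

noncomputable def tterm (q : ℂ) (i j k : ℕ) : ℂ :=
  (-1) ^ k * q ^ (k * (k - 1) / 2) * qPoch q q k * qbin q i k * qbin q j k

lemma tterm_zero (q : ℂ) (i j : ℕ) : tterm q i j 0 = 1 := by
  simp [tterm, qbin_zero_right, qPoch_zero]

lemma tterm_rec (q : ℂ) (i : ℕ) (hi : ∀ s : ℕ, 1 ≤ s → s ≤ i → q ^ s ≠ 1) (j k : ℕ) :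
    tterm q i (j + 1) (k + 1) =
      q ^ (k + 1) * tterm q i j (k + 1) + (q ^ i - q ^ k) * tterm q i j k := by
  have hL := keyL q i hi k
  have hc : (k + 1) * ((k + 1) - 1) / 2 = k * (k - 1) / 2 + k := by
    have h : (k + 1) * ((k + 1) - 1) = k * (k - 1) + 2 * k := by
      cases k with
      | zero => rfl
      | succ m => simp only [Nat.add_sub_cancel, Nat.succ_sub_one]; ring
    rw [h, Nat.add_mul_div_left _ _ (by norm_num : 0 < 2)]
  simp only [tterm, qbin_succ_succ q j k, hc, pow_add, qPoch_succ q k, pow_succ]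
  linear_combination (-((-1) ^ k * q ^ (k * (k - 1) / 2) * qPoch q q k * qbin q j k)) * hL

lemma keyF (q : ℂ) (i : ℕ) (hi : ∀ s : ℕ, 1 ≤ s → s ≤ i → q ^ s ≠ 1) :
    ∀ j : ℕ, ∑ k ∈ Finset.range (j + 1), tterm q i j k = q ^ (i * j) := by
  intro j
  induction j with
  | zero => simp [tterm_zero]
  | succ j ih =>
    rw [Finset.sum_range_succ' (fun k => tterm q i (j + 1) k) (j + 1)]
    rw [tterm_zero]
    have h1 : ∀ k ∈ Finset.range (j + 1),
        tterm q i (j + 1) (k + 1) =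
          q ^ (k + 1) * tterm q i j (k + 1) + (q ^ i - q ^ k) * tterm q i j k := by
      intro k _
      exact tterm_rec q i hi j k
    rw [Finset.sum_congr rfl h1, Finset.sum_add_distrib]
    have h2 : ∑ k ∈ Finset.range (j + 1), q ^ (k + 1) * tterm q i j (k + 1) =
        ∑ k ∈ Finset.range (j + 1), q ^ k * tterm q i j k - 1 := by
      rw [Finset.sum_range_succ' (fun k => q ^ k * tterm q i j k) j]
      have : tterm q i j (j + 1) = 0 := by
        simp [tterm, qbin_of_lt q j (j + 1) (by omega)]
      rw [Finset.sum_range_succ (fun k => q ^ (k + 1) * tterm q i j (k + 1)) j, this,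
        tterm_zero]
      ring
    rw [h2]
    have h3 : ∑ k ∈ Finset.range (j + 1), (q ^ i - q ^ k) * tterm q i j k =
        q ^ i * ∑ k ∈ Finset.range (j + 1), tterm q i j k -
          ∑ k ∈ Finset.range (j + 1), q ^ k * tterm q i j k := by
      rw [Finset.mul_sum, ← Finset.sum_sub_distrib]
      exact Finset.sum_congr rfl fun k _ => by ring
    rw [h3, ih, ← pow_add, show i + i * j = i * (j + 1) from by ring]
    ring

theorem stmt0 (i j : ℕ) (q : ℂ) (hq : ∀ k : ℕ, 1 ≤ k → k ≤ max i j → q ^ k ≠ 1) :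
    q ^ (i * j) = ∑ k ∈ Finset.range (min i j + 1),
      (-1) ^ k * q ^ (k * (k - 1) / 2) * qPoch q q i * qPoch q q j /
        (qPoch q q k * qPoch q q (i - k) * qPoch q q (j - k)) := by
  have hi : ∀ s : ℕ, 1 ≤ s → s ≤ i → q ^ s ≠ 1 :=
    fun s h1 h2 => hq s h1 (le_trans h2 (le_max_left i j))
  have hj : ∀ s : ℕ, 1 ≤ s → s ≤ j → q ^ s ≠ 1 :=
    fun s h1 h2 => hq s h1 (le_trans h2 (le_max_right i j))
  rw [← keyF q i hi j]
  have ha : ∑ k ∈ Finset.range (j + 1), tterm q i j k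
      = ∑ k ∈ Finset.range (min i j + 1), tterm q i j k := by
    symm
    apply Finset.sum_subset
    · intro x hx
      simp only [Finset.mem_range] at hx ⊢
      omega
    · intro x hx1 hx2
      simp only [Finset.mem_range] at hx1 hx2
      have hxi : i < x := by omega
      simp [tterm, qbin_of_lt q i x hxi]
  rw [ha]
  apply Finset.sum_congr rfl
  intro k hk
  simp only [Finset.mem_range] at hk
  have hki : k ≤ i := by omega
  have hkj : k ≤ j := by omega
  have hPk : qPoch q q k ≠ 0 := qPoch_ne_zero fun s h1 h2 => hi s h1 (by omega)
  have hPik : qPoch q q (i - k) ≠ 0 := qPoch_ne_zero fun s h1 h2 => hi s h1 (by omega)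
  have hPjk : qPoch q q (j - k) ≠ 0 := qPoch_ne_zero fun s h1 h2 => hj s h1 (by omega)
  have hA : qbin q i k = qPoch q q i / (qPoch q q k * qPoch q q (i - k)) := by
    rw [eq_div_iff (mul_ne_zero hPk hPik)]; exact qbin_mul q i k hki
  have hB : qbin q j k = qPoch q q j / (qPoch q q k * qPoch q q (j - k)) := by
    rw [eq_div_iff (mul_ne_zero hPk hPjk)]; exact qbin_mul q j k hkj
  rw [tterm, hA, hB]
  field_simp
end

section
/- For |q| < 1, |u| < 1, |v| < 1, the function g(u,v) = (uv;q)_∞ / ((u;q)_∞ (v;q)_∞) has the double Taylor expansion g(u,v) = Σ_{i≥0} Σ_{j≥0} q^{ij} u^i v^j / ((q;q)_i (q;q)_j). -/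
/-!
Summing over `j` first, Euler's identity `∑ w^j/(q;q)_j = 1/(w;q)_∞` at `w = q^i v` gives
`(v;q)_i / (v;q)_∞`, since `(v;q)_∞ = (v;q)_i (q^i v;q)_∞`. The remaining sum over `i` is
`(v;q)_∞⁻¹ ∑ (v;q)_i/(q;q)_i u^i`, and the `q`-binomial theorem evaluates it as
`(uv;q)_∞/(u;q)_∞`. The `q`-binomial series `F(z) = ∑ (a;q)_n/(q;q)_n z^n` satisfies
`(1 - z) F(z) = (1 - a z) F(q z)`; iterating gives `F(z) (z;q)_N = F(q^N z) (az;q)_N`, and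
letting `N → ∞` proves the `q`-binomial theorem, Euler's identity being its case `a = 0`.
-/

open Filter Topology

section InfiniteProduct

variable {q z : ℂ}

lemma summable_norm_mul_pow (z : ℂ) (hq : ‖q‖ < 1) : Summable fun l : ℕ => ‖z * q ^ l‖ := by
  simpa only [norm_mul, norm_pow] using
    (summable_geometric_of_lt_one (norm_nonneg q) hq).mul_left ‖z‖

lemma multipliable_one_sub_mul_pow (z : ℂ) (hq : ‖q‖ < 1) :
    Multipliable fun l : ℕ => 1 - z * q ^ l := by
  simpa only [sub_eq_add_neg] using
    multipliable_one_add_of_summable (by simpa only [norm_neg] using summable_norm_mul_pow z hq)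

lemma norm_mul_pow_le (z : ℂ) (hq : ‖q‖ ≤ 1) (n : ℕ) : ‖z * q ^ n‖ ≤ ‖z‖ := by
  rw [norm_mul, norm_pow]
  exact mul_le_of_le_one_right (norm_nonneg z) (pow_le_one₀ (norm_nonneg q) hq)

lemma one_sub_mul_pow_ne_zero (hq : ‖q‖ ≤ 1) (hz : ‖z‖ < 1) (n : ℕ) : 1 - z * q ^ n ≠ 0 := by
  rw [sub_ne_zero]
  intro h
  have := (norm_mul_pow_le z hq n).trans_lt hz
  rw [← h, norm_one] at this
  exact this.false

lemma norm_pow_mul_lt_one (hq : ‖q‖ ≤ 1) (hz : ‖z‖ < 1) (n : ℕ) : ‖q ^ n * z‖ < 1 :=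
  mul_comm z (q ^ n) ▸ (norm_mul_pow_le z hq n).trans_lt hz

lemma qPoch_ne_zero_s4 (hq : ‖q‖ ≤ 1) (hz : ‖z‖ < 1) (n : ℕ) : qPoch z q n ≠ 0 :=
  Finset.prod_ne_zero_iff.2 fun l _ => one_sub_mul_pow_ne_zero hq hz l

lemma tprod_one_sub_mul_pow_ne_zero (hq : ‖q‖ < 1) (hz : ‖z‖ < 1) :
    ∏' l : ℕ, (1 - z * q ^ l) ≠ 0 := by
  simpa only [sub_eq_add_neg] using tprod_one_add_ne_zero_of_summable
    (by simpa only [← sub_eq_add_neg] using one_sub_mul_pow_ne_zero hq.le hz)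
    (by simpa only [norm_neg] using summable_norm_mul_pow z hq)

lemma tendsto_qPoch (z : ℂ) (hq : ‖q‖ < 1) :
    Tendsto (qPoch z q) atTop (𝓝 (∏' l : ℕ, (1 - z * q ^ l))) :=
  (multipliable_one_sub_mul_pow z hq).hasProd.tendsto_prod_nat

lemma qPoch_mul_tprod_pow_mul (z : ℂ) (hq : ‖q‖ < 1) (n : ℕ) :
    qPoch z q n * ∏' l : ℕ, (1 - q ^ n * z * q ^ l) = ∏' l : ℕ, (1 - z * q ^ l) := by
  have hshift : (fun l : ℕ => 1 - q ^ n * z * q ^ l) = fun l => 1 - z * q ^ (l + n) := by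
    ext l; ring
  rw [hshift]
  exact Multipliable.prod_mul_tprod_nat_mul' <| by
    rw [← hshift]; exact multipliable_one_sub_mul_pow _ hq

end InfiniteProduct

lemma tendsto_tsum_mul_pow_nhds_zero {𝕜 : Type*} [NormedField 𝕜] [CompleteSpace 𝕜]
    {c : ℕ → 𝕜} {C : ℝ} (hc : ∀ n, ‖c n‖ ≤ C) :
    Tendsto (fun z => ∑' n, c n * z ^ n) (𝓝 0) (𝓝 (c 0)) := by
  have hsum : ∑' n, c n * (0 : 𝕜) ^ n = c 0 := by
    rw [tsum_eq_single 0 fun n hn => by rw [zero_pow hn, mul_zero], pow_zero, mul_one]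
  rw [← hsum]
  refine tendsto_tsum_of_dominated_convergence
    ((summable_geometric_of_lt_one (by norm_num) (by norm_num : (1 / 2 : ℝ) < 1)).mul_left C)
    (fun n => ((continuous_const.mul (continuous_pow n)).tendsto 0)) ?_
  filter_upwards [Metric.closedBall_mem_nhds (0 : 𝕜) (by norm_num : (0 : ℝ) < 1 / 2)] with z hz n
  rw [mem_closedBall_zero_iff] at hz
  rw [norm_mul, norm_pow]
  exact mul_le_mul (hc n) (pow_le_pow_left₀ (norm_nonneg z) hz n) (by positivity)
    ((norm_nonneg _).trans (hc n))

section QBinomial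

variable {q z : ℂ}

noncomputable def qBinomialSeries (a q z : ℂ) : ℂ :=
  ∑' n : ℕ, qPoch a q n / qPoch q q n * z ^ n

lemma exists_norm_qPoch_div_qPoch_le (a : ℂ) (hq : ‖q‖ < 1) :
    ∃ C, ∀ n, ‖qPoch a q n / qPoch q q n‖ ≤ C := by
  obtain ⟨C, hC⟩ := isBounded_iff_forall_norm_le.1 <| Metric.isBounded_range_of_tendsto _ <|
    (tendsto_qPoch a hq).div (tendsto_qPoch q hq) (tprod_one_sub_mul_pow_ne_zero hq hq)
  exact ⟨C, fun n => hC _ ⟨n, rfl⟩⟩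

lemma summable_qPoch_div_qPoch_mul_pow (a : ℂ) (hq : ‖q‖ < 1) (hz : ‖z‖ < 1) :
    Summable fun n : ℕ => qPoch a q n / qPoch q q n * z ^ n := by
  obtain ⟨C, hC⟩ := exists_norm_qPoch_div_qPoch_le a hq
  refine .of_norm_bounded ((summable_geometric_of_lt_one (norm_nonneg z) hz).mul_left C)
    fun n => ?_
  rw [norm_mul, norm_pow]
  exact mul_le_mul_of_nonneg_right (hC n) (by positivity)

lemma qPoch_div_qPoch_succ_mul (a : ℂ) (hq : ‖q‖ < 1) (n : ℕ) :
    qPoch a q (n + 1) / qPoch q q (n + 1) * (1 - q ^ (n + 1)) =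
      qPoch a q n / qPoch q q n * (1 - a * q ^ n) := by
  simp only [qPoch, Finset.prod_range_succ]
  rw [pow_succ', ← div_div, div_mul_cancel₀ _ (one_sub_mul_pow_ne_zero hq.le hq n)]
  ring

lemma one_sub_mul_qBinomialSeries (a : ℂ) (hq : ‖q‖ < 1) (hz : ‖z‖ < 1) :
    (1 - z) * qBinomialSeries a q z = (1 - a * z) * qBinomialSeries a q (q * z) := by
  set c : ℕ → ℂ := fun n => qPoch a q n / qPoch q q n
  have hs : Summable fun n => c n * z ^ n := summable_qPoch_div_qPoch_mul_pow a hq hz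
  have hs' : Summable fun n => c n * (q * z) ^ n := summable_qPoch_div_qPoch_mul_pow a hq <| by
    simpa only [pow_one] using norm_pow_mul_lt_one hq.le hz 1
  have hterm : ∀ n, c n * z ^ n - c n * (q * z) ^ n = c n * (1 - q ^ n) * z ^ n := fun n => by
    ring
  have hdiff : qBinomialSeries a q z - qBinomialSeries a q (q * z) =
      ∑' n, c n * (1 - q ^ n) * z ^ n := by
    rw [qBinomialSeries, qBinomialSeries, ← hs.tsum_sub hs']
    exact tsum_congr hterm
  -- the `n = 0` term vanishes, and the recursion for `c` shifts the remaining ones down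
  have hshift : ∑' n, c n * (1 - q ^ n) * z ^ n =
      z * (qBinomialSeries a q z - a * qBinomialSeries a q (q * z)) := by
    rw [((hs.sub hs').congr hterm).tsum_eq_zero_add, qBinomialSeries, qBinomialSeries,
      ← tsum_mul_left, ← hs.tsum_sub (hs'.mul_left a), ← tsum_mul_left]
    simp only [pow_zero, sub_self, mul_zero, zero_mul, zero_add]
    refine tsum_congr fun n => ?_
    rw [qPoch_div_qPoch_succ_mul a hq n]
    ring
  linear_combination hdiff + hshift

lemma qBinomialSeries_mul_qPoch (a : ℂ) (hq : ‖q‖ < 1) (hz : ‖z‖ < 1) (N : ℕ) :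
    qBinomialSeries a q z * qPoch z q N =
      qBinomialSeries a q (q ^ N * z) * qPoch (a * z) q N := by
  induction N with
  | zero => simp [qPoch]
  | succ N ih =>
    have hfun := one_sub_mul_qBinomialSeries a hq (norm_pow_mul_lt_one hq.le hz N)
    have hpow : q ^ (N + 1) * z = q * (q ^ N * z) := by ring
    simp only [qPoch, Finset.prod_range_succ] at ih ⊢
    rw [← mul_assoc, ih, hpow]
    linear_combination (∏ i ∈ Finset.range N, (1 - a * z * q ^ i)) * hfun

lemma qBinomialSeries_eq (a : ℂ) (hq : ‖q‖ < 1) (hz : ‖z‖ < 1) :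
    qBinomialSeries a q z = (∏' l : ℕ, (1 - a * z * q ^ l)) / ∏' l : ℕ, (1 - z * q ^ l) := by
  rw [eq_div_iff (tprod_one_sub_mul_pow_ne_zero hq hz)]
  obtain ⟨C, hC⟩ := exists_norm_qPoch_div_qPoch_le a hq
  have hF : Tendsto (fun N : ℕ => qBinomialSeries a q (q ^ N * z)) atTop (𝓝 1) := by
    have h0 := tendsto_tsum_mul_pow_nhds_zero hC
    simp only [qPoch, Finset.range_zero, Finset.prod_empty, div_one] at h0
    have hw : Tendsto (fun N : ℕ => q ^ N * z) atTop (𝓝 0) := by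
      simpa only [zero_mul] using (tendsto_pow_atTop_nhds_zero_of_norm_lt_one hq).mul_const z
    exact h0.comp hw
  have hlim := (hF.mul (tendsto_qPoch (a * z) hq)).congr
    fun N => (qBinomialSeries_mul_qPoch a hq hz N).symm
  rw [one_mul] at hlim
  exact tendsto_nhds_unique ((tendsto_qPoch z hq).const_mul _) hlim

lemma tsum_pow_div_qPoch (hq : ‖q‖ < 1) (hz : ‖z‖ < 1) :
    ∑' n : ℕ, z ^ n / qPoch q q n = (∏' l : ℕ, (1 - z * q ^ l))⁻¹ := by
  simpa [qBinomialSeries, qPoch, div_eq_inv_mul] using qBinomialSeries_eq 0 hq hz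

lemma tsum_pow_mul_pow_div_qPoch (hq : ‖q‖ < 1) (hz : ‖z‖ < 1) (n : ℕ) :
    ∑' k : ℕ, (q ^ n * z) ^ k / qPoch q q k = qPoch z q n / ∏' l : ℕ, (1 - z * q ^ l) := by
  rw [tsum_pow_div_qPoch hq (norm_pow_mul_lt_one hq.le hz n),
    ← qPoch_mul_tprod_pow_mul z hq n, div_mul_cancel_left₀ (qPoch_ne_zero_s4 hq.le hz n)]

end QBinomial

theorem stmt4 (q u v : ℂ) (hq : ‖q‖ < 1) (hu : ‖u‖ < 1) (hv : ‖v‖ < 1) :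
    (∏' l : ℕ, (1 - u * v * q ^ l)) /
      ((∏' l : ℕ, (1 - u * q ^ l)) * (∏' l : ℕ, (1 - v * q ^ l))) =
      ∑' i : ℕ, ∑' j : ℕ, q ^ (i * j) * u ^ i * v ^ j / (qPoch q q i * qPoch q q j) := by
  have hrow : ∀ i : ℕ, ∑' j : ℕ, q ^ (i * j) * u ^ i * v ^ j / (qPoch q q i * qPoch q q j) =
      (∏' l : ℕ, (1 - v * q ^ l))⁻¹ * (qPoch v q i / qPoch q q i * u ^ i) := fun i => by
    calc _ = u ^ i / qPoch q q i * ∑' j : ℕ, (q ^ i * v) ^ j / qPoch q q j := by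
          rw [← tsum_mul_left]
          exact tsum_congr fun j => by rw [pow_mul]; ring
      _ = _ := by rw [tsum_pow_mul_pow_div_qPoch hq hv i]; ring
  rw [tsum_congr hrow, tsum_mul_left, ← qBinomialSeries, qBinomialSeries_eq v hq hu]
  simp only [mul_comm v u]
  ring
end

section
/- Let n ≥ 1 and q ∈ ℂ with q^j ≠ 1 for all 1 ≤ j ≤ n-1. Then the determinant of the n×n Vandermonde matrix V_q with entries q^{ij} equals Π_{i=0}^{n-1} (-1)^i q^{i(i-1)/2} (q;q)_i. -/
/-!
`V_q` is the Vandermonde matrix of the nodes `1, q, …, q^(n-1)`, so its determinant is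
`∏_{j<n} ∏_{i<j} (q^j - q^i)`. Pulling `-q^i` out of each factor `q^j - q^i` leaves
`1 - q^(j-i)`, and these run through `(q;q)_j` as `i` runs backwards.
-/

open Finset

theorem prod_range_pow_sub_pow {R : Type*} [CommRing R] (q : R) (j : ℕ) :
    ∏ i ∈ range j, (q ^ j - q ^ i) =
      (-1) ^ j * q ^ (j * (j - 1) / 2) * ∏ i ∈ range j, (1 - q ^ (i + 1)) := by
  have factor : ∀ i ∈ range j, q ^ j - q ^ i = -1 * q ^ i * (1 - q ^ (j - i)) := by
    intro i hi
    rw [← pow_mul_pow_sub q (mem_range.mp hi).le]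
    ring
  rw [prod_congr rfl factor, prod_mul_distrib, prod_mul_distrib, prod_const, card_range,
    prod_pow_eq_pow_sum, sum_range_id]
  congr 1
  rw [← prod_range_reflect]
  refine prod_congr rfl fun i hi => ?_
  rw [show j - (j - 1 - i) = i + 1 by have := mem_range.mp hi; omega]

theorem Matrix.det_of_pow_mul {R : Type*} [CommRing R] (q : R) (n : ℕ) :
    (Matrix.of fun i j : Fin n => q ^ ((i : ℕ) * (j : ℕ))).det =
      ∏ j ∈ range n, ∏ i ∈ range j, (q ^ j - q ^ i) := by
  have hV : (Matrix.of fun i j : Fin n => q ^ ((i : ℕ) * (j : ℕ))) =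
      vandermonde fun i : Fin n => q ^ (i : ℕ) := by
    ext i j
    simp [vandermonde_apply, ← pow_mul]
  rw [hV, det_vandermonde, prod_comm' (t' := univ) (s' := fun j => Iio j) (by simp [and_comm]),
    ← Fin.prod_univ_eq_prod_range fun j => ∏ i ∈ range j, (q ^ j - q ^ i)]
  refine prod_congr rfl fun j _ => ?_
  rw [← Nat.Iio_eq_range, ← Fin.map_valEmbedding_Iio, prod_map]
  rfl

theorem stmt17_general (n : ℕ) (q : ℂ) :
    (Matrix.of fun i j : Fin n => q ^ ((i : ℕ) * (j : ℕ))).det =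
      ∏ i ∈ Finset.range n, ((-1) ^ i * q ^ (i * (i - 1) / 2) * qPoch q q i) := by
  rw [Matrix.det_of_pow_mul]
  refine prod_congr rfl fun j _ => ?_
  simp only [prod_range_pow_sub_pow, qPoch, pow_succ']

theorem stmt17 (n : ℕ) (hn : 1 ≤ n) (q : ℂ) (hq : ∀ j : ℕ, 1 ≤ j → j ≤ n - 1 → q ^ j ≠ 1) :
    (Matrix.of fun i j : Fin n => q ^ ((i : ℕ) * (j : ℕ))).det =
      ∏ i ∈ Finset.range n, ((-1) ^ i * q ^ (i * (i - 1) / 2) * qPoch q q i) :=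
  stmt17_general n q
end
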